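/- arXiv:1006.0614 — 2 statements merged into one kernel-verified Lean document; each statement's English description precedes it below -/
import Mathlib

section
/- Let Q(x,y) = ‖x‖² − ‖y‖² on ℝᵘ × ℝˢ, λ̄ > 1 and L > 0. Suppose (Aₖ)_{k≥0} is a sequence of linear maps on ℝⁿ with Q(Aₖ v) − λ̄ Q(v) ≥ L‖v‖² for all v ∈ ℝⁿ and all k. Then there exist c > 0 and λ > 1 (one may take λ = λ̄^{1/2} and c = (L)^{1/2}/λ) such that for every u with Q(u) > 0 and every k ≥ 1, ‖A_{k−1} ⋯ A₀ u‖ ≥ c λᵏ ‖u‖. -/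
/-!
Along an orbit the quadratic form grows geometrically: the first step gives
`Q(w₁) ≥ L‖w₀‖²` because `Q(w₀) > 0`, and each later step gives `Q(wⱼ₊₁) ≥ λ̄ Q(wⱼ)` because
`L‖wⱼ‖² ≥ 0`. Since `Q(v) ≤ ‖v.1‖² ≤ ‖v‖²`, taking square roots yields
`‖wₖ‖ ≥ √L · √λ̄^(k-1) ‖w₀‖`.
-/

lemma sq_norm_fst_sub_sq_norm_snd_le {E F : Type*} [SeminormedAddCommGroup E]
    [SeminormedAddCommGroup F] (x : E × F) : ‖x.1‖ ^ 2 - ‖x.2‖ ^ 2 ≤ ‖x‖ ^ 2 := by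
  have := pow_le_pow_left₀ (norm_nonneg _) (norm_fst_le x) 2
  linarith [sq_nonneg ‖x.2‖]

section Orbit

variable {E : Type*} [Norm E] {Q : E → ℝ} {f : ℕ → E → E} {lamBar L : ℝ} {w : ℕ → E}

lemma le_quadForm_orbit_one (hf : ∀ k v, Q (f k v) - lamBar * Q v ≥ L * ‖v‖ ^ 2)
    (hw : ∀ j, w (j + 1) = f j (w j)) (hlam : 0 ≤ lamBar) (hQ : 0 ≤ Q (w 0)) :
    L * ‖w 0‖ ^ 2 ≤ Q (w 1) := by
  have := hf 0 (w 0)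
  rw [← hw 0] at this
  nlinarith

lemma geom_le_quadForm_orbit (hf : ∀ k v, Q (f k v) - lamBar * Q v ≥ L * ‖v‖ ^ 2)
    (hw : ∀ j, w (j + 1) = f j (w j)) (hlam : 0 ≤ lamBar) (hL : 0 ≤ L) (hQ : 0 ≤ Q (w 0))
    (j : ℕ) : lamBar ^ j * (L * ‖w 0‖ ^ 2) ≤ Q (w (j + 1)) := by
  have hstep : ∀ k < j, lamBar * Q (w (k + 1)) ≤ Q (w (k + 1 + 1)) := fun k _ ↦ by
    have := hf (k + 1) (w (k + 1))
    rw [← hw] at this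
    nlinarith [sq_nonneg ‖w (k + 1)‖]
  calc lamBar ^ j * (L * ‖w 0‖ ^ 2)
      ≤ lamBar ^ j * Q (w 1) := by gcongr; exact le_quadForm_orbit_one hf hw hlam hQ
    _ ≤ Q (w (j + 1)) := geom_le (u := fun k ↦ Q (w (k + 1))) hlam j hstep

end Orbit

theorem stmt7 (nu ns : ℕ)
    (Q : EuclideanSpace ℝ (Fin nu) × EuclideanSpace ℝ (Fin ns) → ℝ)
    (hQ : ∀ v, Q v = ‖v.1‖ ^ 2 - ‖v.2‖ ^ 2)
    (lamBar L : ℝ) (hlam : lamBar > 1) (hL : L > 0)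
    (A : ℕ → ((EuclideanSpace ℝ (Fin nu) × EuclideanSpace ℝ (Fin ns)) →ₗ[ℝ]
        (EuclideanSpace ℝ (Fin nu) × EuclideanSpace ℝ (Fin ns))))
    (hA : ∀ k, ∀ v, Q (A k v) - lamBar * Q v ≥ L * ‖v‖ ^ 2) :
    ∃ c > 0, ∃ lam > 1,
      ∀ u : EuclideanSpace ℝ (Fin nu) × EuclideanSpace ℝ (Fin ns), Q u > 0 →
      ∀ w : ℕ → EuclideanSpace ℝ (Fin nu) × EuclideanSpace ℝ (Fin ns),
        w 0 = u → (∀ j, w (j + 1) = A j (w j)) →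
        ∀ k ≥ 1, ‖w k‖ ≥ c * lam ^ k * ‖u‖ := by
  have hlam0 : 0 ≤ lamBar := by linarith
  have hsqrt : 0 < √lamBar := by positivity
  refine ⟨√L / √lamBar, by positivity, √lamBar, Real.lt_sqrt_of_sq_lt (by linarith), ?_⟩
  rintro u hQu w rfl hw k hk
  obtain ⟨j, rfl⟩ := Nat.exists_eq_add_of_le' hk
  have hgrowth := geom_le_quadForm_orbit hA hw hlam0 hL.le hQu.le j
  have hbound : Q (w (j + 1)) ≤ ‖w (j + 1)‖ ^ 2 := hQ _ ▸ sq_norm_fst_sub_sq_norm_snd_le _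
  have hcoeff : √L / √lamBar * √lamBar ^ (j + 1) = √L * √lamBar ^ j := by
    field_simp; ring
  rw [hcoeff, ge_iff_le]
  refine le_of_pow_le_pow_left₀ two_ne_zero (norm_nonneg _) ?_
  calc (√L * √lamBar ^ j * ‖w 0‖) ^ 2 = lamBar ^ j * (L * ‖w 0‖ ^ 2) := by
        rw [mul_pow, mul_pow, ← pow_mul, mul_comm j, pow_mul, Real.sq_sqrt hL.le,
          Real.sq_sqrt hlam0]
        ring
    _ ≤ ‖w (j + 1)‖ ^ 2 := hgrowth.trans hbound
end

section
/- Let Q(x,y) = ‖x‖² − ‖y‖² on ℝᵘ × ℝˢ, let 0 < λ̄ < 1 and L > 0. Suppose (Aₖ)_{k≥1} is a sequence of invertible linear maps on ℝⁿ with Q(Aₖ v) − λ̄ Q(v) ≥ L‖v‖² for all v and all k. Then there exist c > 0 and λ > 1 such that for every s with Q(s) < 0 and every k ≥ 1, setting sₖ = Aₖ⁻¹ ⋯ A₁⁻¹ s, one has ‖sₖ‖ ≥ c λᵏ ‖s‖. -/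
theorem stmt8 (nu ns : ℕ)
    (Q : EuclideanSpace ℝ (Fin nu) × EuclideanSpace ℝ (Fin ns) → ℝ)
    (hQ : ∀ v, Q v = ‖v.1‖ ^ 2 - ‖v.2‖ ^ 2)
    (lamBar L : ℝ) (hlam0 : 0 < lamBar) (hlam1 : lamBar < 1) (hL : L > 0)
    (A : ℕ → ((EuclideanSpace ℝ (Fin nu) × EuclideanSpace ℝ (Fin ns)) ≃ₗ[ℝ]
        (EuclideanSpace ℝ (Fin nu) × EuclideanSpace ℝ (Fin ns))))
    (hA : ∀ k ≥ 1, ∀ v, Q (A k v) - lamBar * Q v ≥ L * ‖v‖ ^ 2) :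
    ∃ c > 0, ∃ lam > 1,
      ∀ sv : EuclideanSpace ℝ (Fin nu) × EuclideanSpace ℝ (Fin ns), Q sv < 0 →
      ∀ w : ℕ → EuclideanSpace ℝ (Fin nu) × EuclideanSpace ℝ (Fin ns),
        w 0 = sv → (∀ k, w (k + 1) = (A (k + 1)).symm (w k)) →
        ∀ k ≥ 1, ‖w k‖ ≥ c * lam ^ k * ‖sv‖ := by
  set T := LinearMap.toContinuousLinearMap ((A 1) : (EuclideanSpace ℝ (Fin nu) × EuclideanSpace ℝ (Fin ns)) →ₗ[ℝ] (EuclideanSpace ℝ (Fin nu) × EuclideanSpace ℝ (Fin ns))) with hT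
  set M : ℝ := ‖T‖ + 1 with hMdef
  have hM : (0:ℝ) < M := by positivity
  have hM2 : (0:ℝ) < M ^ 2 := by positivity
  refine ⟨Real.sqrt L / M, by positivity, Real.sqrt lamBar⁻¹, ?_, ?_⟩
  · have h1 : (1:ℝ) < lamBar⁻¹ := (one_lt_inv₀ hlam0).mpr hlam1
    nlinarith [Real.sq_sqrt (by positivity : (0:ℝ) ≤ lamBar⁻¹),
      Real.sqrt_nonneg lamBar⁻¹, sq_nonneg (Real.sqrt lamBar⁻¹ - 1)]
  · intro sv hsv w hw0 hws k hk
    have hAe : ∀ j, (A (j+1)) (w (j+1)) = w j := by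
      intro j
      rw [hws j]
      simp
    have hA1 : ‖sv‖ ≤ M * ‖w 1‖ := by
      have h := T.le_opNorm (w 1)
      have he : T (w 1) = (A 1) (w 1) := by rw [hT]; simp
      rw [he, hAe 0, hw0] at h
      nlinarith [norm_nonneg (w 1)]
    have key : ∀ k, 1 ≤ k → L * ‖sv‖ ^ 2 ≤ lamBar ^ k * M ^ 2 * (-(Q (w k))) := by
      intro k hk
      induction k, hk using Nat.le_induction with
      | base =>
        have h := hA 1 le_rfl (w 1)
        rw [hAe 0, hw0] at h
        have h2 : ‖sv‖ ^ 2 ≤ M ^ 2 * ‖w 1‖ ^ 2 := by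
          nlinarith [norm_nonneg sv, norm_nonneg (w 1)]
        have e1 := mul_le_mul_of_nonneg_left h2 hL.le
        have e2 : L * ‖w 1‖ ^ 2 ≤ lamBar * (-(Q (w 1))) := by linarith
        have e3 := mul_le_mul_of_nonneg_left e2 (le_of_lt hM2)
        rw [pow_one]
        linarith
      | succ k hk1 IH =>
        have h := hA (k+1) (Nat.le_add_left 1 k) (w (k+1))
        rw [hAe k] at h
        have hnn : (0:ℝ) ≤ L * ‖w (k+1)‖ ^ 2 := by positivity
        have e2 : -(Q (w k)) ≤ lamBar * (-(Q (w (k+1)))) := by linarith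
        have e3 := mul_le_mul_of_nonneg_left e2
          (by positivity : (0:ℝ) ≤ lamBar ^ k * M ^ 2)
        have hps : lamBar ^ (k+1) = lamBar ^ k * lamBar := pow_succ lamBar k
        rw [hps]
        linarith
    have hQle : -(Q (w k)) ≤ ‖w k‖ ^ 2 := by
      rw [hQ]
      have h1 : ‖(w k).2‖ ≤ ‖w k‖ := norm_snd_le (w k)
      nlinarith [norm_nonneg (w k).2, norm_nonneg (w k), sq_nonneg ‖(w k).1‖]
    have hpk : (0:ℝ) < lamBar ^ k := pow_pos hlam0 k
    have hb : L * ‖sv‖ ^ 2 ≤ lamBar ^ k * M ^ 2 * ‖w k‖ ^ 2 := by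
      have := mul_le_mul_of_nonneg_left hQle (by positivity : (0:ℝ) ≤ lamBar ^ k * M ^ 2)
      linarith [key k hk]
    -- now convert to the sqrt form
    set a : ℝ := Real.sqrt L / M * (Real.sqrt lamBar⁻¹) ^ k * ‖sv‖ with hadef
    have ha0 : 0 ≤ a := by positivity
    have ha2 : a ^ 2 = L / M ^ 2 * (lamBar ^ k)⁻¹ * ‖sv‖ ^ 2 := by
      rw [hadef, mul_pow, mul_pow, div_pow, Real.sq_sqrt hL.le,
        ← pow_mul, mul_comm k 2, pow_mul, Real.sq_sqrt (by positivity : (0:ℝ) ≤ lamBar⁻¹),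
        inv_pow]
    have hsq : a ^ 2 ≤ ‖w k‖ ^ 2 := by
      rw [ha2, div_mul_eq_mul_div, div_mul_eq_mul_div, div_le_iff₀ hM2]
      have h3 := mul_le_mul_of_nonneg_left hb (inv_pos.mpr hpk).le
      have h4 : (lamBar ^ k)⁻¹ * (lamBar ^ k * M ^ 2 * ‖w k‖ ^ 2) = M ^ 2 * ‖w k‖ ^ 2 := by
        field_simp
      rw [h4] at h3
      linarith
    have := Real.sqrt_le_sqrt hsq
    rw [Real.sqrt_sq ha0, Real.sqrt_sq (norm_nonneg (w k))] at this
    exact this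
end
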